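/- The kernel g is continuous on (0, ∞), and lim_{t → 0⁺} t^{1-γ} g(t) = 0. In particular, the function t ↦ t^{1-γ} g(t) extends continuously to [0, ∞) with value 0 at t = 0. -/

import Mathlib

/-!
By the choice of `γ`, `μ ≥ 0` has positive mass on `(γ, 1 - γ)`, hence on some `(q, 1 - γ)` with
`q > γ`, and there `sin (π α) ≥ sin (π γ)` while `r ^ α` dominates `r ^ (1 - γ)` for `r ≤ 1` and
`r ^ q` for `r ≥ 1`. Hence `S r ≥ K r ^ (1 - γ)` on `(0, 1]` and `S r ≥ K r ^ q` on `(1, ∞)`.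
As `|S / (S² + C²)| ≤ 1 / S`, the integrand of `g t` is dominated by `K⁻¹ r ^ (γ - 1)` on `(0, 1]`
and by `K⁻¹ r ^ (-q) e^{-s r}` on `(1, ∞)` for all `t ≥ s > 0`. Dominated convergence gives the
continuity of `g`, and integrating the majorant gives `|g t| ≲ 1 + Γ(1 - q) t ^ (q - 1)`, so
`t ^ (1 - γ) |g t| ≲ t ^ (1 - γ) + t ^ (q - γ) → 0`.
-/

open MeasureTheory Real Set Filter Topology

section RpowKernel

variable {μ w : ℝ → ℝ}

lemma rpow_le_max_one {r α : ℝ} (hr : 0 < r) (h0 : 0 ≤ α) (h1 : α ≤ 1) : r ^ α ≤ max 1 r := by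
  rcases le_total r 1 with h | h
  · exact le_max_of_le_left (rpow_le_one hr.le h h0)
  · exact le_max_of_le_right ((rpow_le_rpow_of_exponent_le h h1).trans_eq (rpow_one r))

lemma norm_mul_rpow_mul_le (hw : ∀ α, |w α| ≤ 1) {r R α : ℝ} (hr : 0 < r) (hrR : r ≤ R)
    (hα : α ∈ Ioo (0 : ℝ) 1) : ‖w α * r ^ α * μ α‖ ≤ max 1 R * ‖μ α‖ := by
  rw [norm_mul, norm_mul, norm_of_nonneg (rpow_nonneg hr.le α), Real.norm_eq_abs (w α)]
  refine mul_le_mul_of_nonneg_right ?_ (norm_nonneg _)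
  calc |w α| * r ^ α ≤ 1 * max 1 R :=
        mul_le_mul (hw α) ((rpow_le_max_one hr hα.1.le hα.2.le).trans (max_le_max le_rfl hrR))
          (rpow_nonneg hr.le α) zero_le_one
    _ = max 1 R := one_mul _

lemma aestronglyMeasurable_mul_rpow_mul (hμ : AEStronglyMeasurable μ (volume.restrict (Ioo 0 1)))
    (hw : Measurable w) (r : ℝ) :
    AEStronglyMeasurable (fun α => w α * r ^ α * μ α) (volume.restrict (Ioo 0 1)) :=
  ((hw.mul (measurable_const.pow measurable_id)).aestronglyMeasurable).mul hμ

lemma integrableOn_mul_rpow_mul (hμ : IntegrableOn μ (Ioo 0 1)) (hw : Measurable w)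
    (hw1 : ∀ α, |w α| ≤ 1) {r : ℝ} (hr : 0 < r) :
    IntegrableOn (fun α => w α * r ^ α * μ α) (Ioo 0 1) :=
  Integrable.mono' (hμ.norm.const_mul (max 1 r))
    (aestronglyMeasurable_mul_rpow_mul hμ.aestronglyMeasurable hw r)
    ((ae_restrict_mem measurableSet_Ioo).mono fun _ hα => norm_mul_rpow_mul_le hw1 hr le_rfl hα)

lemma continuousOn_integral_mul_rpow_mul (hμ : IntegrableOn μ (Ioo 0 1)) (hw : Measurable w)
    (hw1 : ∀ α, |w α| ≤ 1) :
    ContinuousOn (fun r => ∫ α in Ioo (0 : ℝ) 1, w α * r ^ α * μ α) (Ioi 0) := by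
  intro r₀ hr₀
  have hr₀' : (0 : ℝ) < r₀ := hr₀
  refine (continuousAt_of_dominated (bound := fun α => max 1 (2 * r₀) * ‖μ α‖)
    (Eventually.of_forall (aestronglyMeasurable_mul_rpow_mul hμ.aestronglyMeasurable hw)) ?_
    (hμ.norm.const_mul _) ?_).continuousWithinAt
  · filter_upwards [Ioo_mem_nhds hr₀' (by linarith : r₀ < 2 * r₀)] with r hr
    filter_upwards [ae_restrict_mem measurableSet_Ioo] with α hα
    exact norm_mul_rpow_mul_le hw1 hr.1 hr.2.le hα
  · exact ae_of_all _ fun α =>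
      (continuousAt_const.mul (continuousAt_rpow_const _ _ (Or.inl hr₀'.ne'))).mul continuousAt_const

end RpowKernel

lemma sin_pi_mul_le_sin_pi_mul {γ α : ℝ} (hγ : 0 ≤ γ) (hγα : γ ≤ α) (hα : α ≤ 1 - γ) :
    sin (π * γ) ≤ sin (π * α) := by
  have hπ := pi_pos
  rcases le_total α (1 / 2) with h | h
  · exact sin_le_sin_of_le_of_le_pi_div_two (by nlinarith) (by nlinarith)
      (mul_le_mul_of_nonneg_left hγα hπ.le)
  · rw [← sin_pi_sub (π * α), show π - π * α = π * (1 - α) by ring]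
    exact sin_le_sin_of_le_of_le_pi_div_two (by nlinarith) (by nlinarith)
      (mul_le_mul_of_nonneg_left (by linarith) hπ.le)

lemma exists_mem_Ioo_setIntegral_Ioo_pos {f : ℝ → ℝ} {a b : ℝ} (hf : IntegrableOn f (Ioo a b))
    (hpos : 0 < ∫ x in Ioo a b, f x) : ∃ c ∈ Ioo a b, 0 < ∫ x in Ioo c b, f x := by
  have hab : a < b := by
    by_contra! h
    simp [Ioo_eq_empty_of_le h] at hpos
  have hf' : IntegrableOn f (uIcc a b) := by
    rwa [uIcc_of_le hab.le, integrableOn_Icc_iff_integrableOn_Ioo]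
  have hprim : ∀ c ∈ Icc a b, ∫ x in c..b, f x = ∫ x in Ioo c b, f x := fun c hc => by
    rw [intervalIntegral.integral_of_le hc.2, integral_Ioc_eq_integral_Ioo]
  have hcont : ContinuousWithinAt (fun c => ∫ x in c..b, f x) (Ioo a b) a :=
    (intervalIntegral.continuousOn_primitive_interval_left hf' a left_mem_uIcc).mono
      (Ioo_subset_Icc_self.trans (uIcc_of_le hab.le).symm.subset)
  have hev : ∀ᶠ c in 𝓝[Ioo a b] a, 0 < ∫ x in c..b, f x :=
    hcont.eventually (eventually_gt_nhds (show 0 < ∫ x in a..b, f x from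
      (hprim a (left_mem_Icc.2 hab.le)).symm ▸ hpos))
  have : (𝓝[Ioo a b] a).NeBot := left_nhdsWithin_Ioo_neBot hab
  obtain ⟨c, hc, hcpos⟩ := (hev.and self_mem_nhdsWithin).exists
  exact ⟨c, hcpos, hprim c (Ioo_subset_Icc_self hcpos) ▸ hc⟩

section SinTransform

variable {μ : ℝ → ℝ}

lemma sin_mul_integral_mul_le_integral_sin_mul_rpow (hμ : IntegrableOn μ (Ioo 0 1))
    (hμ0 : ∀ α ∈ Ioo (0 : ℝ) 1, 0 ≤ μ α) {γ a b m r : ℝ} (hγ : 0 ≤ γ) (ha : γ ≤ a)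
    (hb : b ≤ 1 - γ) (hr : 0 < r) (hm : ∀ α ∈ Ioo a b, m ≤ r ^ α) :
    sin (π * γ) * (∫ α in Ioo a b, μ α) * m ≤
      ∫ α in Ioo (0 : ℝ) 1, sin (π * α) * r ^ α * μ α := by
  have hsub : Ioo a b ⊆ Ioo 0 1 := Ioo_subset_Ioo (hγ.trans ha) (by linarith)
  have hsin : ∀ α ∈ Ioo (0 : ℝ) 1, 0 ≤ sin (π * α) := fun α hα =>
    sin_nonneg_of_nonneg_of_le_pi (by nlinarith [pi_pos, hα.1]) (by nlinarith [pi_pos, hα.2])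
  have hint : IntegrableOn (fun α => sin (π * α) * r ^ α * μ α) (Ioo 0 1) :=
    integrableOn_mul_rpow_mul hμ (by fun_prop) (fun α => abs_sin_le_one _) hr
  calc sin (π * γ) * (∫ α in Ioo a b, μ α) * m
      = ∫ α in Ioo a b, sin (π * γ) * m * μ α := by
        rw [integral_const_mul]; ring
    _ ≤ ∫ α in Ioo a b, sin (π * α) * r ^ α * μ α := by
        refine setIntegral_mono_on ((hμ.mono_set hsub).const_mul _) (hint.mono_set hsub)
          measurableSet_Ioo fun α hα => mul_le_mul_of_nonneg_right ?_ (hμ0 α (hsub hα))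
        exact mul_le_mul_of_nonneg (sin_pi_mul_le_sin_pi_mul hγ (ha.trans hα.1.le)
          (hα.2.le.trans hb)) (hm α hα)
          (sin_nonneg_of_nonneg_of_le_pi (by positivity) (by nlinarith [pi_pos, hα.1, hα.2]))
          (rpow_nonneg hr.le α)
    _ ≤ ∫ α in Ioo (0 : ℝ) 1, sin (π * α) * r ^ α * μ α :=
        setIntegral_mono_set hint ((ae_restrict_mem measurableSet_Ioo).mono fun α hα =>
            mul_nonneg (mul_nonneg (hsin α hα) (rpow_nonneg hr.le α)) (hμ0 α hα))
          hsub.eventuallyLE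

lemma exists_mul_rpow_le_integral_sin_mul_rpow (hμ : IntegrableOn μ (Ioo 0 1))
    (hμ0 : ∀ α ∈ Ioo (0 : ℝ) 1, 0 ≤ μ α) {γ : ℝ} (hγ : 0 < γ)
    (hmass : 0 < ∫ α in Ioo γ (1 - γ), μ α) :
    ∃ K > 0, ∃ q ∈ Ioo γ (1 - γ),
      (∀ r ∈ Ioc (0 : ℝ) 1, K * r ^ (1 - γ) ≤ ∫ α in Ioo (0 : ℝ) 1, sin (π * α) * r ^ α * μ α) ∧
      ∀ r, 1 < r → K * r ^ q ≤ ∫ α in Ioo (0 : ℝ) 1, sin (π * α) * r ^ α * μ α := by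
  obtain ⟨q, hq, hqmass⟩ := exists_mem_Ioo_setIntegral_Ioo_pos
    (hμ.mono_set (Ioo_subset_Ioo hγ.le (by linarith))) hmass
  have hsin : 0 < sin (π * γ) :=
    sin_pos_of_pos_of_lt_pi (by positivity) (by nlinarith [pi_pos, hq.1, hq.2])
  refine ⟨sin (π * γ) * ∫ α in Ioo q (1 - γ), μ α, mul_pos hsin hqmass, q, hq, ?_, ?_⟩
  · intro r hr
    exact sin_mul_integral_mul_le_integral_sin_mul_rpow hμ hμ0 hγ.le hq.1.le le_rfl hr.1
      fun α hα => rpow_le_rpow_of_exponent_ge hr.1 hr.2 hα.2.le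
  · intro r hr
    exact sin_mul_integral_mul_le_integral_sin_mul_rpow hμ hμ0 hγ.le hq.1.le le_rfl
      (by linarith) fun α hα => rpow_le_rpow_of_exponent_le hr.le hα.1.le

end SinTransform

lemma abs_div_sq_add_sq_le {s c K r e : ℝ} (hK : 0 < K) (hr : 0 < r) (hs : K * r ^ e ≤ s) :
    |s / (s ^ 2 + c ^ 2)| ≤ K⁻¹ * r ^ (-e) := by
  have hKr : 0 < K * r ^ e := mul_pos hK (rpow_pos_of_pos hr e)
  have hs0 : 0 < s := hKr.trans_le hs
  rw [abs_of_nonneg (by positivity)]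
  calc s / (s ^ 2 + c ^ 2) ≤ s / s ^ 2 :=
        div_le_div_of_nonneg_left hs0.le (by positivity) (le_add_of_nonneg_right (sq_nonneg c))
    _ = s⁻¹ := by rw [sq, div_mul_cancel_left₀ hs0.ne']
    _ ≤ (K * r ^ e)⁻¹ := inv_anti₀ hKr hs
    _ = K⁻¹ * r ^ (-e) := by rw [mul_inv, rpow_neg hr.le]

lemma aestronglyMeasurable_div_sq_add_sq {S C : ℝ → ℝ} {s : Set ℝ} (hs : MeasurableSet s)
    (hS : ContinuousOn S s) (hC : ContinuousOn C s) :
    AEStronglyMeasurable (fun r => S r / (S r ^ 2 + C r ^ 2)) (volume.restrict s) :=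
  have hSm := (hS.aestronglyMeasurable (μ := volume) hs).aemeasurable
  have hCm := (hC.aestronglyMeasurable (μ := volume) hs).aemeasurable
  (hSm.div ((hSm.pow_const 2).add (hCm.pow_const 2))).aestronglyMeasurable

section Laplace

variable {A B p q s : ℝ}

lemma integrableOn_mul_rpow_neg_Ioc (hp : p < 1) :
    IntegrableOn (fun r : ℝ => A * r ^ (-p)) (Ioc 0 1) :=
  ((intervalIntegral.intervalIntegrable_rpow' (by linarith : -1 < -p)).1).const_mul A

lemma integrableOn_rpow_neg_mul_exp_neg_mul (hq : q < 1) (hs : 0 < s) :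
    IntegrableOn (fun r : ℝ => r ^ (-q) * exp (-(s * r))) (Ioi 0) := by
  simpa [rpow_one] using integrableOn_rpow_mul_exp_neg_mul_rpow (by linarith : -1 < -q)
    zero_lt_one hs

noncomputable def powerExpBound (A B p q s r : ℝ) : ℝ :=
  (Ioc 0 1).indicator (fun r => A * r ^ (-p)) r + B * (r ^ (-q) * exp (-(s * r)))

lemma integrableOn_powerExpBound (hp : p < 1) (hq : q < 1) (hs : 0 < s) :
    IntegrableOn (powerExpBound A B p q s) (Ioi 0) :=
  ((integrableOn_mul_rpow_neg_Ioc hp).integrable_indicator measurableSet_Ioc).integrableOn.add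
    ((integrableOn_rpow_neg_mul_exp_neg_mul hq hs).const_mul B)

lemma integral_powerExpBound (hp : p < 1) (hq : q < 1) (hs : 0 < s) :
    ∫ r in Ioi 0, powerExpBound A B p q s r = A / (1 - p) + B * (Gamma (1 - q) * s ^ (q - 1)) := by
  have h₀ : ∫ r in Ioc (0 : ℝ) 1, A * r ^ (-p) = A / (1 - p) := by
    rw [integral_const_mul, ← intervalIntegral.integral_of_le zero_le_one,
      integral_rpow (Or.inl (by linarith)), one_rpow, zero_rpow (by linarith), neg_add_eq_sub]
    ring
  have h₁ : ∫ r in Ioi (0 : ℝ), r ^ (-q) * exp (-(s * r)) = Gamma (1 - q) * s ^ (q - 1) := by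
    rw [← sub_sub_cancel_left 1 q, integral_rpow_mul_exp_neg_mul_Ioi (by linarith) hs, one_div,
      inv_rpow hs.le, ← rpow_neg hs.le, neg_sub, mul_comm]
  unfold powerExpBound
  rw [integral_add
      ((integrableOn_mul_rpow_neg_Ioc hp).integrable_indicator measurableSet_Ioc).integrableOn
      ((integrableOn_rpow_neg_mul_exp_neg_mul hq hs).const_mul B),
    setIntegral_indicator measurableSet_Ioc, inter_eq_right.2 Ioc_subset_Ioi_self, h₀,
    integral_const_mul, h₁]

variable {φ : ℝ → ℝ}

lemma norm_exp_mul_le_powerExpBound (hφ₀ : ∀ r ∈ Ioc (0 : ℝ) 1, |φ r| ≤ A * r ^ (-p))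
    (hφ₁ : ∀ r, 1 < r → |φ r| ≤ B * r ^ (-q)) {t r : ℝ} (hs : 0 ≤ s) (hst : s ≤ t)
    (hr : 0 < r) : ‖exp (-r * t) * φ r‖ ≤ powerExpBound A B p q s r := by
  have hB : 0 ≤ B := by
    have := (abs_nonneg _).trans (hφ₁ 2 one_lt_two)
    exact nonneg_of_mul_nonneg_left this (rpow_pos_of_pos two_pos _)
  rw [norm_mul, norm_of_nonneg (exp_pos _).le, Real.norm_eq_abs, powerExpBound]
  by_cases hr1 : r ≤ 1
  · rw [indicator_of_mem (show r ∈ Ioc 0 1 from ⟨hr, hr1⟩)]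
    have hexp : exp (-r * t) ≤ 1 := exp_le_one_iff.2 (by nlinarith)
    calc exp (-r * t) * |φ r| ≤ 1 * (A * r ^ (-p)) :=
          mul_le_mul hexp (hφ₀ r ⟨hr, hr1⟩) (abs_nonneg _) zero_le_one
      _ ≤ A * r ^ (-p) + B * (r ^ (-q) * exp (-(s * r))) := by
          rw [one_mul]; exact le_add_of_nonneg_right (by positivity)
  · rw [indicator_of_notMem fun h => hr1 h.2, zero_add]
    have hexp : exp (-r * t) ≤ exp (-(s * r)) := exp_le_exp.2 (by nlinarith)
    calc exp (-r * t) * |φ r| ≤ exp (-(s * r)) * (B * r ^ (-q)) :=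
          mul_le_mul hexp (hφ₁ r (not_le.1 hr1)) (abs_nonneg _) (exp_pos _).le
      _ = B * (r ^ (-q) * exp (-(s * r))) := by ring

lemma ae_norm_exp_mul_le_powerExpBound (hφ₀ : ∀ r ∈ Ioc (0 : ℝ) 1, |φ r| ≤ A * r ^ (-p))
    (hφ₁ : ∀ r, 1 < r → |φ r| ≤ B * r ^ (-q)) {t : ℝ} (hs : 0 ≤ s) (hst : s ≤ t) :
    ∀ᵐ r ∂(volume.restrict (Ioi 0)), ‖exp (-r * t) * φ r‖ ≤ powerExpBound A B p q s r :=
  (ae_restrict_mem measurableSet_Ioi).mono fun _ hr =>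
    norm_exp_mul_le_powerExpBound hφ₀ hφ₁ hs hst hr

lemma aestronglyMeasurable_exp_mul (hφ : AEStronglyMeasurable φ (volume.restrict (Ioi 0)))
    (t : ℝ) : AEStronglyMeasurable (fun r => exp (-r * t) * φ r) (volume.restrict (Ioi 0)) :=
  (continuous_exp.comp (continuous_neg.mul continuous_const)).aestronglyMeasurable.mul hφ

lemma continuousOn_integral_exp_mul (hφ : AEStronglyMeasurable φ (volume.restrict (Ioi 0)))
    (hp : p < 1) (hq : q < 1) (hφ₀ : ∀ r ∈ Ioc (0 : ℝ) 1, |φ r| ≤ A * r ^ (-p))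
    (hφ₁ : ∀ r, 1 < r → |φ r| ≤ B * r ^ (-q)) :
    ContinuousOn (fun t => ∫ r in Ioi 0, exp (-r * t) * φ r) (Ioi 0) := by
  intro t₀ ht₀
  have ht₀' : (0 : ℝ) < t₀ := ht₀
  refine (continuousAt_of_dominated (bound := powerExpBound A B p q (t₀ / 2))
    (Eventually.of_forall (aestronglyMeasurable_exp_mul hφ)) ?_
    (integrableOn_powerExpBound hp hq (half_pos ht₀')) ?_).continuousWithinAt
  · filter_upwards [Ioi_mem_nhds (half_lt_self ht₀')] with t ht
    exact ae_norm_exp_mul_le_powerExpBound hφ₀ hφ₁ (half_pos ht₀').le (le_of_lt ht)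
  · exact ae_of_all _ fun r => ((continuous_exp.comp
      (continuous_const.mul continuous_id)).continuousAt).mul continuousAt_const

lemma abs_integral_exp_mul_le (hp : p < 1) (hq : q < 1)
    (hφ₀ : ∀ r ∈ Ioc (0 : ℝ) 1, |φ r| ≤ A * r ^ (-p)) (hφ₁ : ∀ r, 1 < r → |φ r| ≤ B * r ^ (-q))
    {t : ℝ} (ht : 0 < t) :
    |∫ r in Ioi 0, exp (-r * t) * φ r| ≤ A / (1 - p) + B * (Gamma (1 - q) * t ^ (q - 1)) := by
  rw [← integral_powerExpBound hp hq ht]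
  exact norm_integral_le_of_norm_le (integrableOn_powerExpBound hp hq ht)
    (ae_norm_exp_mul_le_powerExpBound hφ₀ hφ₁ ht.le le_rfl)

lemma tendsto_rpow_nhdsGT_zero {a : ℝ} (ha : 0 < a) :
    Tendsto (fun t : ℝ => t ^ a) (𝓝[>] 0) (𝓝 0) := by
  simpa [zero_rpow ha.ne'] using
    (continuousAt_rpow_const 0 a (Or.inr ha.le)).tendsto.mono_left nhdsWithin_le_nhds

lemma tendsto_rpow_mul_integral_exp_mul (hp : p < 1) (hq : q < 1)
    (hφ₀ : ∀ r ∈ Ioc (0 : ℝ) 1, |φ r| ≤ A * r ^ (-p)) (hφ₁ : ∀ r, 1 < r → |φ r| ≤ B * r ^ (-q))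
    {a : ℝ} (ha : 0 < a) (haq : 1 < a + q) :
    Tendsto (fun t => t ^ a * ∫ r in Ioi 0, exp (-r * t) * φ r) (𝓝[>] 0) (𝓝 0) := by
  have hlim : Tendsto (fun t : ℝ => A / (1 - p) * t ^ a + B * Gamma (1 - q) * t ^ (a + q - 1))
      (𝓝[>] 0) (𝓝 0) := by
    simpa using ((tendsto_rpow_nhdsGT_zero ha).const_mul (A / (1 - p))).add
      ((tendsto_rpow_nhdsGT_zero (by linarith : 0 < a + q - 1)).const_mul (B * Gamma (1 - q)))
  refine squeeze_zero_norm' ?_ hlim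
  filter_upwards [self_mem_nhdsWithin] with t (ht : 0 < t)
  rw [norm_mul, norm_of_nonneg (rpow_nonneg ht.le a), Real.norm_eq_abs]
  calc t ^ a * |∫ r in Ioi 0, exp (-r * t) * φ r|
      ≤ t ^ a * (A / (1 - p) + B * (Gamma (1 - q) * t ^ (q - 1))) :=
        mul_le_mul_of_nonneg_left (abs_integral_exp_mul_le hp hq hφ₀ hφ₁ ht) (rpow_nonneg ht.le a)
    _ = A / (1 - p) * t ^ a + B * Gamma (1 - q) * (t ^ a * t ^ (q - 1)) := by ring
    _ = A / (1 - p) * t ^ a + B * Gamma (1 - q) * t ^ (a + q - 1) := by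
        rw [← rpow_add ht, add_sub_assoc]

end Laplace

lemma continuousOn_Ici_ite_of_tendsto {E : Type*} [TopologicalSpace E] {f : ℝ → E} {a : ℝ} {y : E}
    (hf : ContinuousOn f (Ioi a)) (hlim : Tendsto f (𝓝[>] a) (𝓝 y)) :
    ContinuousOn (fun t => if t = a then y else f t) (Ici a) := by
  have hupdate : (fun t => if t = a then y else f t) = Function.update f a y := by
    funext t; simp [Function.update_apply]
  rw [hupdate, continuousOn_update_iff, Ici_sdiff_left]
  exact ⟨hf, fun _ => hlim⟩

theorem stmt_7_general (μ : ℝ → ℝ)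
    (hμ_int : IntegrableOn μ (Ioo 0 1))
    (hμ_nonneg : ∀ α ∈ Ioo (0:ℝ) 1, 0 ≤ μ α)
    (hcμ : 0 < ∫ α in Ioo (0:ℝ) 1, μ α)
    (γ : ℝ) (hγ : γ ∈ Ioo (0:ℝ) (1/2))
    (hγμ : (∫ α in Ioo γ (1 - γ), μ α) = ((1 - γ) / 2) * ∫ α in Ioo (0:ℝ) 1, μ α)
    (S C g : ℝ → ℝ)
    (hS : ∀ r : ℝ, S r = ∫ α in Ioo (0:ℝ) 1, Real.sin (π * α) * r ^ α * μ α)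
    (hC : ∀ r : ℝ, C r = ∫ α in Ioo (0:ℝ) 1, Real.cos (π * α) * r ^ α * μ α)
    (hg : ∀ t : ℝ, 0 < t →
      g t = (1/π) * ∫ r in Ioi (0:ℝ), Real.exp (-r * t) * S r / ((S r)^2 + (C r)^2)) :
    ContinuousOn g (Ioi 0) ∧
    Tendsto (fun t : ℝ => t ^ (1 - γ) * g t) (nhdsWithin 0 (Ioi 0)) (nhds 0) ∧
    ContinuousOn (fun t : ℝ => if t = 0 then 0 else t ^ (1 - γ) * g t) (Ici 0) := by
  obtain ⟨hγ₀, hγ₁⟩ := hγ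
  obtain ⟨K, hK, q, hq, hS₀, hS₁⟩ := exists_mul_rpow_le_integral_sin_mul_rpow hμ_int hμ_nonneg hγ₀
    (by rw [hγμ]; exact mul_pos (by linarith) hcμ)
  have hSc : ContinuousOn S (Ioi 0) := funext hS ▸ continuousOn_integral_mul_rpow_mul
    (w := fun α => sin (π * α)) hμ_int (by fun_prop) fun α => abs_sin_le_one _
  have hCc : ContinuousOn C (Ioi 0) := funext hC ▸ continuousOn_integral_mul_rpow_mul
    (w := fun α => cos (π * α)) hμ_int (by fun_prop) fun α => abs_cos_le_one _
  set φ := fun r => S r / (S r ^ 2 + C r ^ 2)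
  have hφ : AEStronglyMeasurable φ (volume.restrict (Ioi 0)) :=
    aestronglyMeasurable_div_sq_add_sq measurableSet_Ioi hSc hCc
  have hφ₀ : ∀ r ∈ Ioc (0 : ℝ) 1, |φ r| ≤ K⁻¹ * r ^ (-(1 - γ)) := fun r hr =>
    abs_div_sq_add_sq_le hK hr.1 ((hS r).symm ▸ hS₀ r hr)
  have hφ₁ : ∀ r, 1 < r → |φ r| ≤ K⁻¹ * r ^ (-q) := fun r hr =>
    abs_div_sq_add_sq_le hK (by linarith) ((hS r).symm ▸ hS₁ r hr)
  have hgφ : ∀ t ∈ Ioi (0 : ℝ), g t = π⁻¹ * ∫ r in Ioi 0, exp (-r * t) * φ r := fun t ht => by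
    simp only [hg t ht, one_div, mul_div_assoc, φ]
  have hp : 1 - γ < 1 := by linarith
  have hq₁ : q < 1 := by linarith [hq.2]
  have hgcont : ContinuousOn g (Ioi 0) :=
    (continuousOn_const.mul (continuousOn_integral_exp_mul hφ hp hq₁ hφ₀ hφ₁)).congr hgφ
  have hlim : Tendsto (fun t => t ^ (1 - γ) * g t) (𝓝[>] 0) (𝓝 0) := by
    have h := (tendsto_rpow_mul_integral_exp_mul hp hq₁ hφ₀ hφ₁ (a := 1 - γ) (by linarith)
      (by linarith [hq.1])).const_mul π⁻¹
    refine (mul_zero π⁻¹ ▸ h).congr' ?_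
    filter_upwards [self_mem_nhdsWithin] with t ht
    rw [hgφ t ht, mul_left_comm]
  exact ⟨hgcont, hlim, continuousOn_Ici_ite_of_tendsto
    ((continuousOn_id.rpow_const fun t ht => Or.inl (ne_of_gt ht)).mul hgcont) hlim⟩

/-- The kernel `g` is continuous on `(0, ∞)`, and
`lim_{t → 0⁺} t^{1-γ} g(t) = 0`; in particular `t ↦ t^{1-γ} g(t)` extends
continuously to `[0, ∞)` with value `0` at `t = 0`. -/
theorem stmt_7 (μ : ℝ → ℝ)
    (hμ_int : IntegrableOn μ (Ioo 0 1))
    (hμ_nonneg : ∀ α ∈ Ioo (0:ℝ) 1, 0 ≤ μ α)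
    (hμ_ne : ¬ (∀ᵐ α ∂(volume.restrict (Ioo (0:ℝ) 1)), μ α = 0))
    (hcμ : 0 < ∫ α in Ioo (0:ℝ) 1, μ α)
    (γ : ℝ) (hγ : γ ∈ Ioo (0:ℝ) (1/2))
    (hγμ : (∫ α in Ioo γ (1 - γ), μ α) = ((1 - γ) / 2) * ∫ α in Ioo (0:ℝ) 1, μ α)
    (S C g : ℝ → ℝ)
    (hS : ∀ r : ℝ, S r = ∫ α in Ioo (0:ℝ) 1, Real.sin (π * α) * r ^ α * μ α)
    (hC : ∀ r : ℝ, C r = ∫ α in Ioo (0:ℝ) 1, Real.cos (π * α) * r ^ α * μ α)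
    (hg : ∀ t : ℝ, 0 < t →
      g t = (1/π) * ∫ r in Ioi (0:ℝ), Real.exp (-r * t) * S r / ((S r)^2 + (C r)^2)) :
    ContinuousOn g (Ioi 0) ∧
    Tendsto (fun t : ℝ => t ^ (1 - γ) * g t) (nhdsWithin 0 (Ioi 0)) (nhds 0) ∧
    ContinuousOn (fun t : ℝ => if t = 0 then 0 else t ^ (1 - γ) * g t) (Ici 0) :=
  stmt_7_general μ hμ_int hμ_nonneg hcμ γ hγ hγμ S C g hS hC hg
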